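/- Let p be a prime, let G be a group, and let G = G₁ ≥ G₂ ≥ ⋯ be a central p-filtration of G. Let n ≥ 1 and suppose that p > 2 or [G_n, G_n] ≤ G_{n+2}. Then for every m ≥ 1 the map x ↦ x^(p^m)·G_{n+m+1} from G_n to G_{n+m}/G_{n+m+1} is a group homomorphism whose kernel contains G_{n+1}; concretely: (i) x^(p^m) ∈ G_{n+m} for all x ∈ G_n; (ii) (x^(p^m) · y^(p^m))⁻¹ · (xy)^(p^m) ∈ G_{n+m+1} for all x, y ∈ G_n; and (iii) x^(p^m) ∈ G_{n+m+1} for all x ∈ G_{n+1}. -/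

import Mathlib

/-! Modulo `G_{k+2}`, two elements `a, b ∈ G_k` have a central commutator `c ∈ G_{k+1}` with
`c ^ p = 1`, so the class-two formula `(a b) ^ p = c ^ (p choose 2) a ^ p b ^ p` makes the
`p`-th power map multiplicative as soon as `p ∣ p choose 2` (that is, `p` odd) or `c` is
already trivial there. Iterating this `m` times, each time absorbing the central error term of
order `p` from the previous level, gives the statement for `p ^ m`. For `p = 2` the hypothesis
`[G_n, G_n] ≤ G_{n+2}` survives this iteration, since `[u, v] ∈ G_k` forces
`[u ^ p, v ^ p] ∈ G_{k+1}` by the same commutator calculus. -/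

/-- The subgroup generated by the `e`-th powers of the elements of `K`. -/
def subgroupPPow {G : Type*} [Group G] (K : Subgroup G) (e : ℕ) : Subgroup G :=
  Subgroup.closure ((fun x => x ^ e) '' (K : Set G))

/-- `Gs` (with `Gs n` interpreted as `G_n` for `n ≥ 1`) is a central `p`-filtration
of `G`: `G₁ = G`, the sequence is descending, and `[G, G_n]·(G_n)ᵖ ≤ G_{n+1}`. -/
def IsCentralPFiltration (p : ℕ) {G : Type*} [Group G] (Gs : ℕ → Subgroup G) : Prop :=
  Gs 1 = ⊤ ∧ (∀ n, 1 ≤ n → Gs (n + 1) ≤ Gs n) ∧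
    ∀ n, 1 ≤ n → ⁅(⊤ : Subgroup G), Gs n⁆ ⊔ subgroupPPow (Gs n) p ≤ Gs (n + 1)

open scoped commutatorElement

section CentralCommutator

variable {H : Type*} [Group H] {a b : H}

theorem pow_mul_eq_commutatorElement_pow_mul_of_mem_center
    (hc : ⁅b, a⁆ ∈ Subgroup.center H) (k : ℕ) : b ^ k * a = ⁅b, a⁆ ^ k * a * b ^ k := by
  have hc' := Subgroup.mem_center_iff.mp hc
  induction k with
  | zero => simp
  | succ k ih =>
    have hba : b * a = ⁅b, a⁆ * a * b := by rw [commutatorElement_def]; group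
    calc b ^ (k + 1) * a = b * (b ^ k * a) := by rw [pow_succ', mul_assoc]
      _ = b * ⁅b, a⁆ ^ k * a * b ^ k := by rw [ih]; simp only [mul_assoc]
      _ = ⁅b, a⁆ ^ k * (b * a) * b ^ k := by
        rw [(Commute.pow_right (hc' b) k).eq]; simp only [mul_assoc]
      _ = ⁅b, a⁆ ^ (k + 1) * a * b ^ (k + 1) := by
        rw [hba, pow_succ, pow_succ']; simp only [mul_assoc]

theorem mul_pow_eq_commutatorElement_pow_mul_of_mem_center
    (hc : ⁅b, a⁆ ∈ Subgroup.center H) (k : ℕ) :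
    (a * b) ^ k = ⁅b, a⁆ ^ k.choose 2 * a ^ k * b ^ k := by
  have hc' := Subgroup.mem_center_iff.mp hc
  induction k with
  | zero => simp
  | succ k ih =>
    have hchoose : (k + 1).choose 2 = k.choose 2 + k := by
      rw [Nat.choose_succ_succ, Nat.choose_one_right, add_comm]
    calc (a * b) ^ (k + 1) = ⁅b, a⁆ ^ k.choose 2 * a ^ k * (b ^ k * a) * b := by
          rw [pow_succ, ih]; simp only [mul_assoc]
      _ = ⁅b, a⁆ ^ k.choose 2 * (a ^ k * ⁅b, a⁆ ^ k) * a * b ^ k * b := by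
          rw [pow_mul_eq_commutatorElement_pow_mul_of_mem_center hc]; simp only [mul_assoc]
      _ = ⁅b, a⁆ ^ (k + 1).choose 2 * a ^ (k + 1) * b ^ (k + 1) := by
          rw [(Commute.pow_right (hc' (a ^ k)) k).eq, hchoose, pow_add, pow_succ, pow_succ]
          simp only [mul_assoc]

theorem commute_pow_of_commutatorElement_pow_eq_one
    (hc : ⁅b, a⁆ ∈ Subgroup.center H) {k : ℕ} (hk : ⁅b, a⁆ ^ k = 1) : Commute a (b ^ k) := by
  have := pow_mul_eq_commutatorElement_pow_mul_of_mem_center hc k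
  rw [hk, one_mul] at this
  exact this.symm

end CentralCommutator

theorem QuotientGroup.mk_commutatorElement {G : Type*} [Group G] {N : Subgroup G} [N.Normal]
    (a b : G) : ((⁅a, b⁆ : G) : G ⧸ N) = ⁅(a : G ⧸ N), (b : G ⧸ N)⁆ :=
  map_commutatorElement (QuotientGroup.mk' N) a b

namespace IsCentralPFiltration

variable {G : Type*} [Group G] {p : ℕ} {Gs : ℕ → Subgroup G} {k : ℕ} {x : G}

theorem commutatorElement_mem (hGs : IsCentralPFiltration p Gs) (hk : 1 ≤ k) (g : G)
    (hx : x ∈ Gs k) : ⁅g, x⁆ ∈ Gs (k + 1) :=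
  hGs.2.2 k hk <| Subgroup.mem_sup_left <|
    Subgroup.commutator_mem_commutator (Subgroup.mem_top g) hx

theorem pow_mem (hGs : IsCentralPFiltration p Gs) (hk : 1 ≤ k) (hx : x ∈ Gs k) :
    x ^ p ∈ Gs (k + 1) :=
  hGs.2.2 k hk <| Subgroup.mem_sup_right <| Subgroup.subset_closure ⟨x, hx, rfl⟩

theorem pow_pow_mem (hGs : IsCentralPFiltration p Gs) (hk : 1 ≤ k) (hx : x ∈ Gs k) (j : ℕ) :
    x ^ p ^ j ∈ Gs (k + j) := by
  induction j with
  | zero => simpa using hx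
  | succ j ih =>
    rw [pow_succ, pow_mul]
    exact hGs.pow_mem (k := k + j) (by omega) ih

theorem normal (hGs : IsCentralPFiltration p Gs) (hk : 1 ≤ k) : (Gs k).Normal :=
  Subgroup.commutator_top_left_le_iff.mp <| (hGs.2.1 k hk).trans' <|
    Subgroup.commutator_le.mpr fun g _ _ hx => hGs.commutatorElement_mem hk g hx

theorem mk_mem_center (hGs : IsCentralPFiltration p Gs) (hk : 1 ≤ k) [(Gs (k + 1)).Normal]
    (hx : x ∈ Gs k) : (x : G ⧸ Gs (k + 1)) ∈ Subgroup.center (G ⧸ Gs (k + 1)) := by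
  refine Subgroup.mem_center_iff.mpr fun q ↦ ?_
  induction q using QuotientGroup.induction_on with
  | H g =>
    rw [← commutatorElement_eq_one_iff_mul_comm, ← QuotientGroup.mk_commutatorElement]
    exact (QuotientGroup.eq_one_iff _).mpr (hGs.commutatorElement_mem hk g hx)

theorem mk_pow_eq_one (hGs : IsCentralPFiltration p Gs) (hk : 1 ≤ k) [(Gs (k + 1)).Normal]
    (hx : x ∈ Gs k) : (x : G ⧸ Gs (k + 1)) ^ p = 1 :=
  (QuotientGroup.eq_one_iff _).mpr (hGs.pow_mem hk hx)

theorem commutatorElement_pow_mem (hGs : IsCentralPFiltration p Gs) (hk : 1 ≤ k) {u v : G}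
    (huv : ⁅u, v⁆ ∈ Gs k) : ⁅u ^ p, v ^ p⁆ ∈ Gs (k + 1) := by
  have := hGs.normal (k := k + 1) (by omega)
  rw [← QuotientGroup.eq_one_iff, QuotientGroup.mk_commutatorElement,
    commutatorElement_eq_one_iff_commute, QuotientGroup.mk_pow, QuotientGroup.mk_pow]
  have hcenter := hGs.mk_mem_center hk huv
  have horder := hGs.mk_pow_eq_one hk huv
  rw [QuotientGroup.mk_commutatorElement] at hcenter horder
  exact (commute_pow_of_commutatorElement_pow_eq_one hcenter horder).pow_left p |>.symm

theorem commutatorElement_pow_pow_mem (hGs : IsCentralPFiltration p Gs) (hk : 1 ≤ k) {u v : G}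
    (huv : ⁅u, v⁆ ∈ Gs k) (j : ℕ) : ⁅u ^ p ^ j, v ^ p ^ j⁆ ∈ Gs (k + j) := by
  induction j with
  | zero => simpa using huv
  | succ j ih =>
    rw [pow_succ, pow_mul, pow_mul]
    exact hGs.commutatorElement_pow_mem (k := k + j) (by omega) ih

theorem mul_pow_mem_of_commutatorElement_mem (hp : p.Prime) (hGs : IsCentralPFiltration p Gs)
    (hk : 1 ≤ k) {a b : G} (hba : ⁅b, a⁆ ∈ Gs k) (hcase : 2 < p ∨ ⁅b, a⁆ ∈ Gs (k + 1)) :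
    (a ^ p * b ^ p)⁻¹ * (a * b) ^ p ∈ Gs (k + 1) := by
  have := hGs.normal (k := k + 1) (by omega)
  have hchoose : ((⁅b, a⁆ : G) : G ⧸ Gs (k + 1)) ^ p.choose 2 = 1 := by
    rcases hcase with hp2 | hba'
    · obtain ⟨d, hd⟩ := hp.dvd_choose_self two_ne_zero hp2
      rw [hd, pow_mul, hGs.mk_pow_eq_one hk hba, one_pow]
    · rw [(QuotientGroup.eq_one_iff _).mpr hba', one_pow]
  have hcenter := hGs.mk_mem_center hk hba
  rw [QuotientGroup.mk_commutatorElement] at hcenter hchoose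
  rw [← QuotientGroup.eq, QuotientGroup.mk_mul, QuotientGroup.mk_pow, QuotientGroup.mk_pow,
    QuotientGroup.mk_pow, QuotientGroup.mk_mul,
    mul_pow_eq_commutatorElement_pow_mul_of_mem_center hcenter, hchoose, one_mul]

theorem mul_pow_mem_of_right_mem (hGs : IsCentralPFiltration p Gs) (hk : 1 ≤ k) (g : G) {c : G}
    (hc : c ∈ Gs k) : (g ^ p)⁻¹ * (g * c) ^ p ∈ Gs (k + 1) := by
  have := hGs.normal (k := k + 1) (by omega)
  have hcomm : Commute (g : G ⧸ Gs (k + 1)) c :=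
    Subgroup.mem_center_iff.mp (hGs.mk_mem_center hk hc) g
  rw [← QuotientGroup.eq, QuotientGroup.mk_pow, QuotientGroup.mk_pow, QuotientGroup.mk_mul,
    hcomm.mul_pow, hGs.mk_pow_eq_one hk hc, mul_one]

theorem mul_pow_pow_mem (hp : p.Prime) (hGs : IsCentralPFiltration p Gs) {n : ℕ} (hn : 1 ≤ n)
    (hcase : 2 < p ∨ ⁅Gs n, Gs n⁆ ≤ Gs (n + 2)) {x y : G} (hx : x ∈ Gs n) (hy : y ∈ Gs n)
    (m : ℕ) : (x ^ p ^ m * y ^ p ^ m)⁻¹ * (x * y) ^ p ^ m ∈ Gs (n + m + 1) := by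
  induction m with
  | zero => simp
  | succ m ih =>
    set a := x ^ p ^ m
    set b := y ^ p ^ m
    set c := (a * b)⁻¹ * (x * y) ^ p ^ m
    have hxy : (x * y) ^ p ^ (m + 1) = (a * b * c) ^ p := by
      rw [pow_succ, pow_mul, mul_inv_cancel_left]
    have hba : ⁅b, a⁆ ∈ Gs (n + m + 1) :=
      hGs.commutatorElement_mem (by omega) b (hGs.pow_pow_mem hn hx m)
    have hcase' : 2 < p ∨ ⁅b, a⁆ ∈ Gs (n + m + 2) := hcase.imp_right fun hcomm ↦ by
      simpa only [Nat.add_right_comm] using hGs.commutatorElement_pow_pow_mem (by omega)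
        (hcomm (Subgroup.commutator_mem_commutator hy hx)) m
    have hab := hGs.mul_pow_mem_of_commutatorElement_mem hp (by omega) hba hcase'
    have habc := hGs.mul_pow_mem_of_right_mem (k := n + m + 1) (by omega) (a * b) ih
    rw [hxy, pow_succ, pow_mul, pow_mul]
    show (a ^ p * b ^ p)⁻¹ * (a * b * c) ^ p ∈ Gs (n + m + 1 + 1)
    simpa only [mul_assoc, mul_inv_cancel_left] using mul_mem hab habc

end IsCentralPFiltration

theorem centralPFiltration_pow_hom_general {G : Type*} [Group G] (p : ℕ) (hp : p.Prime)
    (Gs : ℕ → Subgroup G) (hGs : IsCentralPFiltration p Gs) (n : ℕ) (hn : 1 ≤ n)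
    (hcase : 2 < p ∨ ⁅Gs n, Gs n⁆ ≤ Gs (n + 2)) (m : ℕ) :
    (∀ x ∈ Gs n, x ^ p ^ m ∈ Gs (n + m)) ∧
    (∀ x ∈ Gs n, ∀ y ∈ Gs n,
      (x ^ p ^ m * y ^ p ^ m)⁻¹ * (x * y) ^ p ^ m ∈ Gs (n + m + 1)) ∧
    (∀ x ∈ Gs (n + 1), x ^ p ^ m ∈ Gs (n + m + 1)) :=
  ⟨fun _ hx ↦ hGs.pow_pow_mem hn hx m,
    fun _ hx _ hy ↦ hGs.mul_pow_pow_mem hp hn hcase hx hy m,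
    fun _ hx ↦ Nat.add_right_comm n 1 m ▸ hGs.pow_pow_mem (by omega) hx m⟩

/-- Let `{G_n}` be a central `p`-filtration of `G`, `n ≥ 1`, and suppose `p > 2` or
`[G_n, G_n] ≤ G_{n+2}`. Then for every `m ≥ 1` the map `x ↦ x^(p^m)·G_{n+m+1}` from
`G_n` to `G_{n+m}/G_{n+m+1}` is a homomorphism with kernel containing `G_{n+1}`:
(i) `p^m`-th powers of elements of `G_n` lie in `G_{n+m}`; (ii) the map is
multiplicative modulo `G_{n+m+1}`; (iii) `p^m`-th powers of elements of `G_{n+1}`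
lie in `G_{n+m+1}`. -/
theorem centralPFiltration_pow_hom {G : Type*} [Group G] (p : ℕ) (hp : p.Prime)
    (Gs : ℕ → Subgroup G) (hGs : IsCentralPFiltration p Gs) (n : ℕ) (hn : 1 ≤ n)
    (hcase : 2 < p ∨ ⁅Gs n, Gs n⁆ ≤ Gs (n + 2)) (m : ℕ) (hm : 1 ≤ m) :
    (∀ x ∈ Gs n, x ^ p ^ m ∈ Gs (n + m)) ∧
    (∀ x ∈ Gs n, ∀ y ∈ Gs n,
      (x ^ p ^ m * y ^ p ^ m)⁻¹ * (x * y) ^ p ^ m ∈ Gs (n + m + 1)) ∧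
    (∀ x ∈ Gs (n + 1), x ^ p ^ m ∈ Gs (n + m + 1)) :=
  centralPFiltration_pow_hom_general p hp Gs hGs n hn hcase m
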